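/- arXiv:2411.05767 — 9 statements merged into one kernel-verified Lean document; each statement's English description precedes it below -/
import Mathlib

section
/- Let a, c, t, s ∈ ℝ_{>0}. The 2×2 real matrix g with entries g₁₁=(tc+sa)/(a+c), g₁₂=(t-s)/(a+c), g₂₁=ac(t-s)/(a+c), g₂₂=(ta+sc)/(a+c) has all four entries positive and positive determinant if and only if t/s > 1. -/
open Matrix

/- The matrix is `P * diagonal ![t, s] * P⁻¹` with `P = !![1, 1; a, -c]`, hence its determinant. -/
theorem det_conj_diagonal_two {K : Type*} [Field K] {a c : K} (hac : a + c ≠ 0) (t s : K) :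
    (!![(t * c + s * a) / (a + c), (t - s) / (a + c);
        a * c * (t - s) / (a + c), (t * a + s * c) / (a + c)]).det = t * s := by
  rw [det_fin_two_of]
  field_simp
  ring

theorem stmt1_general (a c t s : ℝ) (ha : 0 < a) (hc : 0 < c) (hs : 0 < s) :
    ((0 < (t * c + s * a)/(a + c) ∧ 0 < (t - s)/(a + c) ∧
      0 < a * c * (t - s)/(a + c) ∧ 0 < (t * a + s * c)/(a + c)) ∧
     0 < (!![(t * c + s * a)/(a + c), (t - s)/(a + c);
             a * c * (t - s)/(a + c), (t * a + s * c)/(a + c)]).det) ↔ t / s > 1 := by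
  have hac : 0 < a + c := add_pos ha hc
  rw [det_conj_diagonal_two hac.ne', gt_iff_lt, one_lt_div hs]
  constructor
  · rintro ⟨⟨-, h12, -, -⟩, -⟩
    exact sub_pos.mp ((div_pos_iff_of_pos_right hac).mp h12)
  · intro hst
    have ht : 0 < t := hs.trans hst
    have hts : 0 < t - s := sub_pos.mpr hst
    exact ⟨⟨by positivity, by positivity, by positivity, by positivity⟩, by positivity⟩

theorem stmt1 (a c t s : ℝ) (ha : 0 < a) (hc : 0 < c) (ht : 0 < t) (hs : 0 < s) :
    ((0 < (t * c + s * a)/(a + c) ∧ 0 < (t - s)/(a + c) ∧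
      0 < a * c * (t - s)/(a + c) ∧ 0 < (t * a + s * c)/(a + c)) ∧
     0 < (!![(t * c + s * a)/(a + c), (t - s)/(a + c);
             a * c * (t - s)/(a + c), (t * a + s * c)/(a + c)]).det) ↔ t / s > 1 :=
  stmt1_general a c t s ha hc hs
end

section
/- Let M = [[1,0,0],[x,1,0],[z,y,1]] be a lower unitriangular 3×3 complex matrix with z ≠ 0 and xy - z ≠ 0, and let M̃ = [[1, y/(xy-z), 1/z],[0,1,x/z],[0,0,1]]. Then M·B⁺·M⁻¹ = M̃·B⁻·M̃⁻¹, where B⁺ (resp. B⁻) is the Borel subgroup of upper (resp. lower) triangular matrices in GL₃(ℂ). -/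
/-!
Factor `M = M̃ w₀ U`, where `w₀` is the antidiagonal permutation matrix and
`U = !![z, y, 1; 0, (z - x y) / z, -x / z; 0, 0, 1 / (x y - z)]` is upper triangular with
determinant `-1`. Conjugation by `U` preserves `B⁺` and conjugation by `w₀` reverses rows and
columns, turning `B⁺` into `B⁻`; hence `M B⁺ M⁻¹ = M̃ w₀ B⁺ w₀⁻¹ M̃⁻¹ = M̃ B⁻ M̃⁻¹`.
-/

open Matrix

/-- The set of invertible upper triangular 3×3 complex matrices (Borel `B⁺`). -/
def Bplus : Set (Matrix (Fin 3) (Fin 3) ℂ) :=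
  {b | IsUnit b.det ∧ ∀ i j : Fin 3, (j : ℕ) < (i : ℕ) → b i j = 0}

/-- The set of invertible lower triangular 3×3 complex matrices (Borel `B⁻`). -/
def Bminus : Set (Matrix (Fin 3) (Fin 3) ℂ) :=
  {b | IsUnit b.det ∧ ∀ i j : Fin 3, (i : ℕ) < (j : ℕ) → b i j = 0}

namespace Matrix

variable {m : Type*} [Fintype m] [DecidableEq m] {R : Type*} [CommRing R]

theorem image_conj_mul (N A : Matrix m m R) (S : Set (Matrix m m R)) :
    (fun b => N * A * b * (N * A)⁻¹) '' S =
      (fun b => N * b * N⁻¹) '' ((fun b => A * b * A⁻¹) '' S) := by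
  simp only [Set.image_image, mul_inv_rev, Matrix.mul_assoc]

theorem permMatrix_mul_mul_inv_permMatrix (σ : Equiv.Perm m) (M : Matrix m m R) :
    σ.permMatrix R * M * (σ.permMatrix R)⁻¹ = M.submatrix σ σ := by
  have hinv : (σ.permMatrix R)⁻¹ = σ⁻¹.permMatrix R :=
    inv_eq_left_inv (by rw [← permMatrix_mul, mul_inv_cancel, permMatrix_one])
  rw [hinv, PEquiv.toMatrix_toPEquiv_mul, PEquiv.mul_toMatrix_toPEquiv, submatrix_submatrix]
  rfl

theorem image_conj_setOf_blockTriangular {α : Type*} [LinearOrder α] {b : m → α}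
    {U : Matrix m m R} (hU : IsUnit U.det) (hUb : U.BlockTriangular b) :
    (fun M => U * M * U⁻¹) '' {M | IsUnit M.det ∧ M.BlockTriangular b} =
      {M | IsUnit M.det ∧ M.BlockTriangular b} := by
  have := U.invertibleOfIsUnitDet hU
  have hUinv : IsUnit U⁻¹.det := (U.isUnit_nonsing_inv_det_iff).mpr hU
  have hUinvb : U⁻¹.BlockTriangular b := blockTriangular_inv_of_blockTriangular hUb
  ext M
  constructor
  · rintro ⟨M, ⟨hM, hMb⟩, rfl⟩
    exact ⟨by simpa only [det_mul] using (hU.mul hM).mul hUinv, (hUb.mul hMb).mul hUinvb⟩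
  · rintro ⟨hM, hMb⟩
    refine ⟨U⁻¹ * M * U, ⟨?_, (hUinvb.mul hMb).mul hUb⟩, ?_⟩
    · simpa only [det_mul] using (hUinv.mul hM).mul hU
    · simp only [← Matrix.mul_assoc, mul_inv_of_invertible, Matrix.one_mul]
      simp only [Matrix.mul_assoc, mul_inv_of_invertible, Matrix.mul_one]

theorem image_conj_permMatrix_revPerm {n : ℕ} :
    (fun M => Fin.revPerm.permMatrix R * M * (Fin.revPerm.permMatrix R)⁻¹) ''
        {M : Matrix (Fin n) (Fin n) R | IsUnit M.det ∧ M.IsUpperTriangular} =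
      {M | IsUnit M.det ∧ M.IsLowerTriangular} := by
  simp only [permMatrix_mul_mul_inv_permMatrix]
  ext M
  constructor
  · rintro ⟨M, ⟨hM, hMu⟩, rfl⟩
    exact ⟨(det_submatrix_equiv_self Fin.revPerm M).symm ▸ hM,
      fun i j hij => hMu (Fin.rev_lt_rev.mpr hij)⟩
  · rintro ⟨hM, hMl⟩
    refine ⟨M.submatrix Fin.revPerm Fin.revPerm, ⟨(det_submatrix_equiv_self Fin.revPerm M).symm ▸ hM,
      fun i j hij => hMl (Fin.rev_lt_rev.mpr hij)⟩, ?_⟩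
    ext i j
    simp

end Matrix

theorem Bplus_eq : Bplus = {M | IsUnit M.det ∧ M.IsUpperTriangular} := rfl

theorem Bminus_eq : Bminus = {M | IsUnit M.det ∧ M.IsLowerTriangular} := rfl

theorem stmt3 (x y z : ℂ) (hz : z ≠ 0) (hxyz : x * y - z ≠ 0) :
    (fun b => !![1, 0, 0; x, 1, 0; z, y, 1] * b * (!![1, 0, 0; x, 1, 0; z, y, 1])⁻¹) '' Bplus =
    (fun b => !![1, y/(x*y - z), 1/z; 0, 1, x/z; 0, 0, 1] * b *
        (!![1, y/(x*y - z), 1/z; 0, 1, x/z; 0, 0, 1])⁻¹) '' Bminus := by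
  set U : Matrix (Fin 3) (Fin 3) ℂ := !![z, y, 1; 0, (z - x * y) / z, -x / z; 0, 0, 1 / (x * y - z)]
  have hU : U.IsUpperTriangular := by
    intro i j hij
    fin_cases i <;> fin_cases j <;> simp_all [U]
  have hUdet : IsUnit U.det := by
    rw [det_of_isUpperTriangular hU, Fin.prod_univ_three, isUnit_iff_ne_zero]
    simp [U, hz, hxyz, sub_eq_zero, (sub_ne_zero.mp hxyz).symm]
  have hM : !![1, 0, 0; x, 1, 0; z, y, 1] =
      !![1, y/(x*y - z), 1/z; 0, 1, x/z; 0, 0, 1] * (Fin.revPerm.permMatrix ℂ * U) := by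
    -- `field_simp` normalises `x * y - z` to `y * x - z`
    have hyx : y * x - z ≠ 0 := by rwa [mul_comm]
    rw [PEquiv.toMatrix_toPEquiv_mul]
    ext i j
    fin_cases i <;> fin_cases j <;> simp [U, mul_apply, Fin.sum_univ_three] <;> field_simp <;> ring
  rw [Bplus_eq, Bminus_eq, hM, image_conj_mul, image_conj_mul,
    image_conj_setOf_blockTriangular hUdet hU, image_conj_permMatrix_revPerm]
end

section
/- A 3×3 upper unitriangular matrix [[1,p,q],[0,1,r],[0,0,1]] lies in U⁺_{>0} (i.e., equals x₁(a₁)x₂(a₂)x₁(a₃) for some a₁,a₂,a₃ ∈ ℝ_{>0}) if and only if p > 0, r > 0, q > 0 and pr − q > 0. -/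
open Matrix

theorem stmt5 (p q r : ℝ) :
    (∃ a₁ a₂ a₃ : ℝ, 0 < a₁ ∧ 0 < a₂ ∧ 0 < a₃ ∧
      (!![1, p, q; 0, 1, r; 0, 0, 1] : Matrix (Fin 3) (Fin 3) ℝ) =
        !![1, a₁, 0; 0, 1, 0; 0, 0, 1] * !![1, 0, 0; 0, 1, a₂; 0, 0, 1] *
          !![1, a₃, 0; 0, 1, 0; 0, 0, 1]) ↔
    (0 < p ∧ 0 < r ∧ 0 < q ∧ 0 < p * r - q) := by
  constructor
  · rintro ⟨a₁, a₂, a₃, h₁, h₂, h₃, heq⟩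
    have hp : p = a₃ + a₁ := by
      have := congrFun (congrFun heq 0) 1
      simpa [Matrix.mul_apply, Fin.sum_univ_succ] using this
    have hq : q = a₁ * a₂ := by
      have := congrFun (congrFun heq 0) 2
      simpa [Matrix.mul_apply, Fin.sum_univ_succ] using this
    have hr : r = a₂ := by
      have := congrFun (congrFun heq 1) 2
      simpa [Matrix.mul_apply, Fin.sum_univ_succ] using this
    refine ⟨by nlinarith, by nlinarith, by nlinarith, by nlinarith⟩
  · rintro ⟨hp, hr, hq, hd⟩
    refine ⟨q / r, r, p - q / r, by positivity, hr, ?_, ?_⟩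
    · have : p - q / r = (p * r - q) / r := by field_simp
      rw [this]; positivity
    · ext i j
      fin_cases i <;> fin_cases j <;>
        · simp [Matrix.mul_apply, Fin.sum_univ_succ, Matrix.vecHead, Matrix.vecTail]
          try field_simp
end

section
/- A 3×3 lower unitriangular matrix [[1,0,0],[a,1,0],[b,c,1]] lies in U⁻_{>0} (i.e., equals y₁(a₁)y₂(a₂)y₁(a₃) for some a₁,a₂,a₃ ∈ ℝ_{>0}) if and only if a > 0, c > 0, b > 0 and ac − b > 0. -/
/-!
The product `y₁(a₁) y₂(a₂) y₁(a₃)` is `[[1,0,0],[a₁+a₃,1,0],[a₂a₃,a₂,1]]`, so the factorization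
parameters are recovered uniquely as `a₂ = c`, `a₃ = b / c`, `a₁ = (ac - b) / c`; in particular
`ac - b = a₁a₂`, and all three are positive exactly when `a, c, b, ac - b` are.
-/

open Matrix

theorem lowerUnitriangular_fin_three_inj {R : Type*} [Zero R] [One R] {a b c a' b' c' : R} :
    (!![1, 0, 0; a, 1, 0; b, c, 1] : Matrix (Fin 3) (Fin 3) R) = !![1, 0, 0; a', 1, 0; b', c', 1] ↔
      a = a' ∧ b = b' ∧ c = c' := by
  simp

theorem y₁_mul_y₂_mul_y₁ {R : Type*} [CommRing R] (a₁ a₂ a₃ : R) :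
    !![1, 0, 0; a₁, 1, 0; 0, 0, 1] * !![1, 0, 0; 0, 1, 0; 0, a₂, 1] *
        !![1, 0, 0; a₃, 1, 0; 0, 0, 1] =
      (!![1, 0, 0; a₁ + a₃, 1, 0; a₂ * a₃, a₂, 1] : Matrix (Fin 3) (Fin 3) R) := by
  simp

theorem stmt6 (a b c : ℝ) :
    (∃ a₁ a₂ a₃ : ℝ, 0 < a₁ ∧ 0 < a₂ ∧ 0 < a₃ ∧
      (!![1, 0, 0; a, 1, 0; b, c, 1] : Matrix (Fin 3) (Fin 3) ℝ) =
        !![1, 0, 0; a₁, 1, 0; 0, 0, 1] * !![1, 0, 0; 0, 1, 0; 0, a₂, 1] *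
          !![1, 0, 0; a₃, 1, 0; 0, 0, 1]) ↔
    (0 < a ∧ 0 < c ∧ 0 < b ∧ 0 < a * c - b) := by
  simp only [y₁_mul_y₂_mul_y₁, lowerUnitriangular_fin_three_inj]
  constructor
  · rintro ⟨a₁, a₂, a₃, h₁, h₂, h₃, ha, hb, hc⟩
    subst a b c
    have hminor : (a₁ + a₃) * a₂ - a₂ * a₃ = a₁ * a₂ := by ring
    exact ⟨by positivity, h₂, by positivity, hminor ▸ by positivity⟩
  · rintro ⟨ha, hc, hb, hd⟩
    refine ⟨(a * c - b) / c, c, b / c, by positivity, hc, by positivity, ?_, ?_, rfl⟩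
    · field_simp
      ring
    · field_simp
end

section
/- Let S, A, C be as in 4.1 and g = S·diag(t,s,r)·S⁻¹ with t,s,r ∈ ℝ_{>0}. If g lies in G_{>0} (all nine entries positive, all four 'consecutive' 2×2 minors g_{i,j}g_{i+1,j+1} − g_{i,j+1}g_{i+1,j} positive for (i,j) ∈ {(1,1),(1,2),(2,1),(2,2)}, and det g > 0), then t > s > r. -/
open Matrix

/-- Total positivity for a 3×3 real matrix: all entries positive, the four
consecutive 2×2 minors positive, and the determinant positive. -/
def TP3 (g : Matrix (Fin 3) (Fin 3) ℝ) : Prop :=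
  (∀ i j : Fin 3, 0 < g i j) ∧
  (∀ i j : Fin 2, 0 < g i.castSucc j.castSucc * g i.succ j.succ -
      g i.castSucc j.succ * g i.succ j.castSucc) ∧
  0 < g.det

/-! The columns of `S` are eigenvectors of `g = S diag(t, s, r) S⁻¹` (and `det S = 1`). The
first column is positive and the second changes sign, so comparing them against the positive
matrix `g` gives `s < t`. For `s > r`, run the same comparison for the positive matrix
`altSign * adj g * altSign`, whose eigenvalues are `det g / λ` and for which the sign-flipped
third column is a positive eigenvector. -/

/-- At an index `k` minimising `w k / v k`, the vector `w - ρ v` is nonnegative and vanishes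
at `k`, yet `B` maps it to a vector that is positive at `k`. -/
theorem Matrix.eigenvalue_lt_of_pos_eigenvector_of_sign_change {ι : Type*} [Fintype ι]
    {B : Matrix ι ι ℝ} (hB : ∀ i j, 0 < B i j) {v w : ι → ℝ} {μ ν : ℝ}
    (hv : ∀ i, 0 < v i) (hBv : B *ᵥ v = μ • v) (hBw : B *ᵥ w = ν • w)
    {i j : ι} (hwi : w i < 0) (hwj : 0 < w j) : ν < μ := by
  obtain ⟨k, -, hk⟩ :=
    Finset.exists_min_image Finset.univ (fun l => w l / v l) ⟨i, Finset.mem_univ i⟩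
  set ρ := w k / v k
  have hρ : ρ < 0 := (hk i (Finset.mem_univ i)).trans_lt (div_neg_of_neg_of_pos hwi (hv i))
  have hwk : w k = ρ * v k := (div_mul_cancel₀ _ (hv k).ne').symm
  have hgap : ∀ l, 0 ≤ w l - ρ * v l := fun l => by
    have := (le_div_iff₀ (hv l)).mp (hk l (Finset.mem_univ l))
    linarith
  have hpos : 0 < (B *ᵥ (w - ρ • v)) k :=
    Finset.sum_pos' (fun l _ => mul_nonneg (hB k l).le (by simpa using hgap l))
      ⟨j, Finset.mem_univ j, mul_pos (hB k j) (by
        simp only [Pi.sub_apply, Pi.smul_apply, smul_eq_mul]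
        nlinarith [hv j])⟩
  rw [mulVec_sub, mulVec_smul, hBv, hBw] at hpos
  simp only [Pi.sub_apply, Pi.smul_apply, smul_eq_mul, hwk] at hpos
  nlinarith [mul_neg_of_neg_of_pos hρ (hv k)]

theorem Matrix.conj_diagonal_mulVec_col {ι K : Type*} [Fintype ι] [DecidableEq ι] [Field K]
    {S : Matrix ι ι K} (hS : IsUnit S.det) (d : ι → K) (k : ι) :
    (S * diagonal d * S⁻¹) *ᵥ S.col k = d k • S.col k := by
  rw [← mulVec_single_one, mulVec_mulVec, Matrix.mul_assoc, Matrix.mul_assoc,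
    nonsing_inv_mul S hS, Matrix.mul_one, ← mulVec_mulVec, diagonal_mulVec_single,
    ← mulVec_smul, ← Pi.single_smul', smul_eq_mul]

theorem Matrix.adjugate_mulVec_of_mulVec_eq_smul {ι K : Type*} [Fintype ι] [DecidableEq ι]
    [Field K] {M : Matrix ι ι K} {v : ι → K} {μ : K} (h : M *ᵥ v = μ • v) (hμ : μ ≠ 0) :
    M.adjugate *ᵥ v = (M.det / μ) • v := by
  have key : μ • (M.adjugate *ᵥ v) = M.det • v := by
    rw [← mulVec_smul, ← h, mulVec_mulVec, adjugate_mul, smul_mulVec, one_mulVec]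
  rw [div_eq_inv_mul, mul_smul, ← key, smul_smul, inv_mul_cancel₀ hμ, one_smul]

theorem Matrix.mulVec_mulVec_of_mul_self_eq_one {ι K : Type*} [Fintype ι] [DecidableEq ι]
    [CommRing K] {E : Matrix ι ι K} (hE : E * E = 1) (M : Matrix ι ι K) (v : ι → K) :
    (E * M * E) *ᵥ (E *ᵥ v) = E *ᵥ (M *ᵥ v) := by
  rw [mulVec_mulVec, Matrix.mul_assoc (E * M), hE, Matrix.mul_one, mulVec_mulVec]

theorem minor_pos_of_adjacent_minors_pos {x₁ x₂ x₃ y₁ y₂ y₃ : ℝ}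
    (hx₁ : 0 < x₁) (hx₂ : 0 < x₂) (hx₃ : 0 < x₃)
    (h₁₂ : 0 < x₁ * y₂ - x₂ * y₁) (h₂₃ : 0 < x₂ * y₃ - x₃ * y₂) :
    0 < x₁ * y₃ - x₃ * y₁ := by
  have key : (x₁ * y₃ - x₃ * y₁) * x₂ = (x₁ * y₂ - x₂ * y₁) * x₃ + (x₂ * y₃ - x₃ * y₂) * x₁ := by
    ring
  exact (mul_pos_iff_of_pos_right hx₂).mp (key ▸ by positivity)

def altSign : Matrix (Fin 3) (Fin 3) ℝ := diagonal ![1, -1, 1]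

theorem altSign_mul_self : altSign * altSign = 1 := by
  rw [altSign, diagonal_mul_diagonal, ← diagonal_one]
  congr 1
  ext i
  fin_cases i <;> norm_num

theorem altSign_mulVec_apply (v : Fin 3 → ℝ) (i : Fin 3) :
    (altSign *ᵥ v) i = ![1, -1, 1] i * v i :=
  mulVec_diagonal _ _ _

/-- Conjugation by `altSign` cancels the checkerboard signs of the cofactors, leaving the nine
2×2 minors; the five non-consecutive ones are positive because the consecutive ones are. -/
theorem TP3.altSign_adjugate_altSign_pos {g : Matrix (Fin 3) (Fin 3) ℝ} (hg : TP3 g)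
    (i j : Fin 3) : 0 < (altSign * g.adjugate * altSign) i j := by
  obtain ⟨hpos, hmin, -⟩ := hg
  have m00 : 0 < g 0 0 * g 1 1 - g 0 1 * g 1 0 := hmin 0 0
  have m01 : 0 < g 0 1 * g 1 2 - g 0 2 * g 1 1 := hmin 0 1
  have m10 : 0 < g 1 0 * g 2 1 - g 1 1 * g 2 0 := hmin 1 0
  have m11 : 0 < g 1 1 * g 2 2 - g 1 2 * g 2 1 := hmin 1 1
  have n0102 : 0 < g 0 0 * g 1 2 - g 0 2 * g 1 0 :=
    minor_pos_of_adjacent_minors_pos (hpos 0 0) (hpos 0 1) (hpos 0 2) m00 m01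
  have n1202 : 0 < g 1 0 * g 2 2 - g 1 2 * g 2 0 :=
    minor_pos_of_adjacent_minors_pos (hpos 1 0) (hpos 1 1) (hpos 1 2) m10 m11
  have n0201 : 0 < g 0 0 * g 2 1 - g 2 0 * g 0 1 :=
    minor_pos_of_adjacent_minors_pos (y₂ := g 1 1) (hpos 0 0) (hpos 1 0) (hpos 2 0)
      (by linarith) (by linarith)
  have n0212 : 0 < g 0 1 * g 2 2 - g 2 1 * g 0 2 :=
    minor_pos_of_adjacent_minors_pos (y₂ := g 1 2) (hpos 0 1) (hpos 1 1) (hpos 2 1)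
      (by linarith) (by linarith)
  have n0202 : 0 < g 0 0 * g 2 2 - g 2 0 * g 0 2 :=
    minor_pos_of_adjacent_minors_pos (y₂ := g 1 2) (hpos 0 0) (hpos 1 0) (hpos 2 0)
      (by linarith) (by linarith)
  fin_cases i <;> fin_cases j <;>
    simp [altSign, adjugate_fin_three, mul_apply, Fin.sum_univ_three] <;> linarith

theorem TP3.eigenvalue_lt_of_altSign_pos {g : Matrix (Fin 3) (Fin 3) ℝ} (hg : TP3 g)
    {v w : Fin 3 → ℝ} {μ ν : ℝ} (hμ : 0 < μ) (hν : 0 < ν)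
    (hv : g *ᵥ v = μ • v) (hw : g *ᵥ w = ν • w) (hv_pos : ∀ i, 0 < (altSign *ᵥ v) i)
    {i j : Fin 3} (hwi : (altSign *ᵥ w) i < 0) (hwj : 0 < (altSign *ᵥ w) j) : μ < ν := by
  have conj_adjugate_eigen : ∀ {u : Fin 3 → ℝ} {κ : ℝ}, κ ≠ 0 → g *ᵥ u = κ • u →
      (altSign * g.adjugate * altSign) *ᵥ (altSign *ᵥ u) = (g.det / κ) • (altSign *ᵥ u) :=
    fun hκ hu => by
      rw [mulVec_mulVec_of_mul_self_eq_one altSign_mul_self,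
        adjugate_mulVec_of_mulVec_eq_smul hu hκ, mulVec_smul]
  have := eigenvalue_lt_of_pos_eigenvector_of_sign_change hg.altSign_adjugate_altSign_pos hv_pos
    (conj_adjugate_eigen hμ.ne' hv) (conj_adjugate_eigen hν.ne' hw) hwi hwj
  exact (div_lt_div_iff_of_pos_left hg.2.2 hν hμ).mp this

theorem det_eigenbasis_eq_one {a b c a' b' c' A C : ℝ}
    (hA : A = a * c + a' * c + a' * c' - b - b') (hC : C = a * c' + b + b')
    (hA₀ : A ≠ 0) (hC₀ : C ≠ 0) :
    (!![1, -(c + c')/C, 1/A;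
        a, (-(a*c) + b + b')/C, -a'/A;
        b, (a*c*c' - b*c' + b'*c)/C, (a'*c' - b')/A] : Matrix (Fin 3) (Fin 3) ℝ).det = 1 := by
  rw [det_fin_three]
  simp only [of_apply, cons_val', cons_val_zero, cons_val_fin_one, cons_val_one, cons_val,
    one_mul]
  field_simp
  rw [hA, hC]
  ring

theorem stmt10_general (a b c a' b' c' : ℝ) (ha : 0 < a) (hb : 0 < b) (hc : 0 < c)
    (ha' : 0 < a') (hb' : 0 < b') (hc' : 0 < c')
    (h1 : 0 < a * c - b) (h2 : 0 < a' * c' - b')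
    (A C : ℝ) (hA : A = a * c + a' * c + a' * c' - b - b') (hC : C = a * c' + b + b')
    (t s r : ℝ) (hs : 0 < s) (hr : 0 < r)
    (S : Matrix (Fin 3) (Fin 3) ℝ)
    (hS : S = !![1, -(c + c')/C, 1/A;
                 a, (-(a*c) + b + b')/C, -a'/A;
                 b, (a*c*c' - b*c' + b'*c)/C, (a'*c' - b')/A])
    (hg : TP3 (S * diagonal ![t, s, r] * S⁻¹)) :
    t > s ∧ s > r := by
  have hA_pos : 0 < A := by nlinarith [mul_pos ha' hc]
  have hC_pos : 0 < C := by rw [hC]; positivity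
  have hS_det : S.det = 1 := hS ▸ det_eigenbasis_eq_one hA hC hA_pos.ne' hC_pos.ne'
  have hcol := conj_diagonal_mulVec_col (by simp [hS_det] : IsUnit S.det) ![t, s, r]
  have hcol0_pos : ∀ i, 0 < S.col 0 i := by
    intro i; fin_cases i <;> simp [hS, ha, hb]
  have hcol1_neg : S.col 1 0 < 0 := by
    simpa [hS] using div_neg_of_neg_of_pos (by linarith : -c' + -c < 0) hC_pos
  have hcol1_pos : 0 < S.col 1 2 := by
    simpa [hS] using div_pos (by nlinarith [mul_pos hc' h1, mul_pos hb' hc]) hC_pos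
  have hcol2_pos : ∀ i, 0 < (altSign *ᵥ S.col 2) i := by
    intro i
    fin_cases i <;> simp [altSign_mulVec_apply, hS]
    · exact hA_pos
    · exact div_neg_of_neg_of_pos (neg_neg_of_pos ha') hA_pos
    · exact div_pos h2 hA_pos
  constructor
  · exact eigenvalue_lt_of_pos_eigenvector_of_sign_change hg.1 hcol0_pos (hcol 0) (hcol 1)
      hcol1_neg hcol1_pos
  · exact hg.eigenvalue_lt_of_altSign_pos hr hs (hcol 2) (hcol 1) hcol2_pos
      (i := 0) (j := 2) (by simpa [altSign_mulVec_apply] using hcol1_neg)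
      (by simpa [altSign_mulVec_apply] using hcol1_pos)

theorem stmt10 (a b c a' b' c' : ℝ) (ha : 0 < a) (hb : 0 < b) (hc : 0 < c)
    (ha' : 0 < a') (hb' : 0 < b') (hc' : 0 < c')
    (h1 : 0 < a * c - b) (h2 : 0 < a' * c' - b')
    (A C : ℝ) (hA : A = a * c + a' * c + a' * c' - b - b') (hC : C = a * c' + b + b')
    (t s r : ℝ) (ht : 0 < t) (hs : 0 < s) (hr : 0 < r)
    (S : Matrix (Fin 3) (Fin 3) ℝ)
    (hS : S = !![1, -(c + c')/C, 1/A;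
                 a, (-(a*c) + b + b')/C, -a'/A;
                 b, (a*c*c' - b*c' + b'*c)/C, (a'*c' - b')/A])
    (hg : TP3 (S * diagonal ![t, s, r] * S⁻¹)) :
    t > s ∧ s > r :=
  stmt10_general a b c a' b' c' ha hb hc ha' hb' hc' h1 h2 A C hA hC t s r hs hr S hS hg
end

section
/- Let S, A, C be as in 4.1. For any positive reals a,b,c,a',b',c' with ac−b>0, a'c'−b'>0, there exist t > s > r > 0 such that g = S·diag(t,s,r)·S⁻¹ lies in G_{>0}. In particular, for each such S the set {S·diag(t,s,r)·S⁻¹ : (t,s,r) ∈ ℝ_{>0}³} ∩ G_{>0} is nonempty. -/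
open Matrix

open Filter in
private lemma ev2' (p q u : ℝ) (hp : 0 < p) : ∀ᶠ x : ℝ in atTop, 0 < p*x^2 + q*x + u := by
  filter_upwards [eventually_ge_atTop ((|q| + |u|) / p + 1)] with x hx
  have h0 : 0 ≤ (|q| + |u|) / p := by positivity
  have h1 : (1:ℝ) ≤ x := by linarith
  have h2 : |q| + |u| ≤ (x - 1) * p := by
    rw [← div_le_iff₀ hp]; linarith
  nlinarith [le_abs_self q, neg_abs_le q, le_abs_self u, neg_abs_le u, abs_nonneg q, abs_nonneg u]

open Filter in
private lemma ev3' (p q u v : ℝ) (hp : 0 < p) :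
    ∀ᶠ x : ℝ in atTop, 0 < p*x^3 + q*x^2 + u*x + v := by
  filter_upwards [eventually_ge_atTop ((|q| + |u| + |v|) / p + 1)] with x hx
  have h0 : 0 ≤ (|q| + |u| + |v|) / p := by positivity
  have h1 : (1:ℝ) ≤ x := by linarith
  have h2 : |q| + |u| + |v| ≤ (x - 1) * p := by
    rw [← div_le_iff₀ hp]; linarith
  nlinarith [le_abs_self q, neg_abs_le q, le_abs_self u, neg_abs_le u, le_abs_self v,
    neg_abs_le v, abs_nonneg q, abs_nonneg u, abs_nonneg v]

set_option maxHeartbeats 1000000 in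
open Filter in
theorem stmt12 (a b c a' b' c' : ℝ) (ha : 0 < a) (hb : 0 < b) (hc : 0 < c)
    (ha' : 0 < a') (hb' : 0 < b') (hc' : 0 < c')
    (h1 : 0 < a * c - b) (h2 : 0 < a' * c' - b')
    (A C : ℝ) (hA : A = a * c + a' * c + a' * c' - b - b') (hC : C = a * c' + b + b')
    (S : Matrix (Fin 3) (Fin 3) ℝ)
    (hS : S = !![1, -(c + c')/C, 1/A;
                 a, (-(a*c) + b + b')/C, -a'/A;
                 b, (a*c*c' - b*c' + b'*c)/C, (a'*c' - b')/A]) :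
    ∃ t s r : ℝ, t > s ∧ s > r ∧ r > 0 ∧ TP3 (S * diagonal ![t, s, r] * S⁻¹) := by
  have hA0 : 0 < A := by rw [hA]; nlinarith [mul_pos ha' hc]
  have hC0 : 0 < C := by rw [hC]; positivity
  have hCC : 0 < a*c' + b + b' := by positivity
  set T : Matrix (Fin 3) (Fin 3) ℝ :=
    !![b'/C, c'/C, 1/C;
       -(a'*b - a*b' + a*a'*c')/A, (a'*c' - b' - b)/A, (a+a')/A;
       a*c - b, -c, 1] with hT
  set U : Matrix (Fin 3) (Fin 3) ℝ :=
    !![1, -(c+c'), 1;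
       a, -(a*c)+b+b', -a';
       b, a*c*c'-b*c'+b'*c, a'*c'-b'] with hU
  set V : Matrix (Fin 3) (Fin 3) ℝ :=
    !![b', c', 1;
       -(a'*b - a*b' + a*a'*c'), a'*c'-b'-b, a+a';
       a*c-b, -c, 1] with hV
  have hST : S * T = 1 := by
    subst hS
    ext i j
    fin_cases i <;> fin_cases j <;>
      simp [hT, Matrix.mul_apply, Fin.sum_univ_three, Matrix.one_apply] <;>
      (field_simp; rw [hA, hC]; ring)
  have hSinv : S⁻¹ = T := inv_eq_right_inv hST
  rw [hSinv]
  -- entry expansion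
  have hgx : ∀ (x : ℝ) (i j : Fin 3), (S * diagonal ![x^2, x, 1] * T) i j
      = (S i 0 * T 0 j) * x^2 + (S i 1 * T 1 j) * x + (S i 2 * T 2 j) := by
    intro x i j
    simp [Matrix.mul_apply, Fin.sum_univ_three, Matrix.diagonal_apply]
    ring
  have hPQ : ∀ i j : Fin 3, S i 0 * T 0 j = (U i 0 * V 0 j)/C
      ∧ S i 1 * T 1 j = (U i 1 * V 1 j)/(C*A) ∧ S i 2 * T 2 j = (U i 2 * V 2 j)/A := by
    intro i j
    fin_cases i <;> fin_cases j <;> refine ⟨?_, ?_, ?_⟩ <;> simp [hS, hT, hU, hV] <;> ring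
  have hgx' : ∀ (x : ℝ) (i j : Fin 3), (S * diagonal ![x^2, x, 1] * T) i j
      = (U i 0 * V 0 j)/C * x^2 + (U i 1 * V 1 j)/(C*A) * x + (U i 2 * V 2 j)/A := by
    intro x i j
    rw [hgx, (hPQ i j).1, (hPQ i j).2.1, (hPQ i j).2.2]
  -- entry leading coefficients
  have hent : ∀ i j : Fin 3, 0 < (U i 0 * V 0 j)/C := by
    intro i j
    fin_cases i <;> fin_cases j <;> simp [hU, hV] <;> positivity
  -- eventual positivity of entries
  have E : ∀ᶠ x : ℝ in atTop, ∀ i j : Fin 3, 0 < (S * diagonal ![x^2, x, 1] * T) i j := by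
    rw [eventually_all]
    intro i
    rw [eventually_all]
    intro j
    filter_upwards [ev2' ((U i 0 * V 0 j)/C) ((U i 1 * V 1 j)/(C*A)) ((U i 2 * V 2 j)/A)
      (hent i j)] with x hx
    rw [hgx']; exact hx
  -- eventual positivity of consecutive 2x2 minors
  have M : ∀ᶠ x : ℝ in atTop, ∀ i j : Fin 2,
      0 < (S * diagonal ![x^2, x, 1] * T) i.castSucc j.castSucc
            * (S * diagonal ![x^2, x, 1] * T) i.succ j.succ
          - (S * diagonal ![x^2, x, 1] * T) i.castSucc j.succ
            * (S * diagonal ![x^2, x, 1] * T) i.succ j.castSucc := by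
    rw [eventually_all]
    intro i
    rw [eventually_all]
    intro j
    fin_cases i <;> fin_cases j
    · show ∀ᶠ x : ℝ in Filter.atTop,
          0 < (S * diagonal ![x^2, x, 1] * T) 0 0 * (S * diagonal ![x^2, x, 1] * T) 1 1 - (S * diagonal ![x^2, x, 1] * T) 0 1 * (S * diagonal ![x^2, x, 1] * T) 1 0
      have hN : (0:ℝ) < U 0 0*V 0 0*(U 1 1*V 1 1) + U 0 1*V 1 0*(U 1 0*V 0 1) - U 0 0*V 0 1*(U 1 1*V 1 0) - U 0 1*V 1 1*(U 1 0*V 0 0) := by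
        have hkey : U 0 0*V 0 0*(U 1 1*V 1 1) + U 0 1*V 1 0*(U 1 0*V 0 1) - U 0 0*V 0 1*(U 1 1*V 1 0) - U 0 1*V 1 1*(U 1 0*V 0 0) = (a'*c'-b')*(a*c'+b+b')^2 := by
          simp [hU, hV]; ring
        rw [hkey]
        exact mul_pos h2 (pow_pos hCC 2)
      filter_upwards [ev3' ((U 0 0*V 0 0*(U 1 1*V 1 1) + U 0 1*V 1 0*(U 1 0*V 0 1) - U 0 0*V 0 1*(U 1 1*V 1 0) - U 0 1*V 1 1*(U 1 0*V 0 0))/(C^2*A))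
        ((U 0 0*V 0 0*(U 1 2*V 2 1) + U 0 2*V 2 0*(U 1 0*V 0 1) - U 0 0*V 0 1*(U 1 2*V 2 0) - U 0 2*V 2 1*(U 1 0*V 0 0))/(C*A) + (U 0 1*V 1 0*(U 1 1*V 1 1) - U 0 1*V 1 1*(U 1 1*V 1 0))/(C^2*A^2))
        ((U 0 1*V 1 0*(U 1 2*V 2 1) + U 0 2*V 2 0*(U 1 1*V 1 1) - U 0 1*V 1 1*(U 1 2*V 2 0) - U 0 2*V 2 1*(U 1 1*V 1 0))/(C*A^2))
        ((U 0 2*V 2 0*(U 1 2*V 2 1) - U 0 2*V 2 1*(U 1 2*V 2 0))/A^2)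
        (div_pos hN (by positivity))] with x hx
      rw [hgx', hgx', hgx', hgx']
      convert hx using 1
      ring
    · show ∀ᶠ x : ℝ in Filter.atTop,
          0 < (S * diagonal ![x^2, x, 1] * T) 0 1 * (S * diagonal ![x^2, x, 1] * T) 1 2 - (S * diagonal ![x^2, x, 1] * T) 0 2 * (S * diagonal ![x^2, x, 1] * T) 1 1
      have hN : (0:ℝ) < U 0 0*V 0 1*(U 1 1*V 1 2) + U 0 1*V 1 1*(U 1 0*V 0 2) - U 0 0*V 0 2*(U 1 1*V 1 1) - U 0 1*V 1 2*(U 1 0*V 0 1) := by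
        have hkey : U 0 0*V 0 1*(U 1 1*V 1 2) + U 0 1*V 1 1*(U 1 0*V 0 2) - U 0 0*V 0 2*(U 1 1*V 1 1) - U 0 1*V 1 2*(U 1 0*V 0 1) = (a*c'+b+b')^2 := by
          simp [hU, hV]; ring
        rw [hkey]
        exact pow_pos hCC 2
      filter_upwards [ev3' ((U 0 0*V 0 1*(U 1 1*V 1 2) + U 0 1*V 1 1*(U 1 0*V 0 2) - U 0 0*V 0 2*(U 1 1*V 1 1) - U 0 1*V 1 2*(U 1 0*V 0 1))/(C^2*A))
        ((U 0 0*V 0 1*(U 1 2*V 2 2) + U 0 2*V 2 1*(U 1 0*V 0 2) - U 0 0*V 0 2*(U 1 2*V 2 1) - U 0 2*V 2 2*(U 1 0*V 0 1))/(C*A) + (U 0 1*V 1 1*(U 1 1*V 1 2) - U 0 1*V 1 2*(U 1 1*V 1 1))/(C^2*A^2))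
        ((U 0 1*V 1 1*(U 1 2*V 2 2) + U 0 2*V 2 1*(U 1 1*V 1 2) - U 0 1*V 1 2*(U 1 2*V 2 1) - U 0 2*V 2 2*(U 1 1*V 1 1))/(C*A^2))
        ((U 0 2*V 2 1*(U 1 2*V 2 2) - U 0 2*V 2 2*(U 1 2*V 2 1))/A^2)
        (div_pos hN (by positivity))] with x hx
      rw [hgx', hgx', hgx', hgx']
      convert hx using 1
      ring
    · show ∀ᶠ x : ℝ in Filter.atTop,
          0 < (S * diagonal ![x^2, x, 1] * T) 1 0 * (S * diagonal ![x^2, x, 1] * T) 2 1 - (S * diagonal ![x^2, x, 1] * T) 1 1 * (S * diagonal ![x^2, x, 1] * T) 2 0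
      have hN : (0:ℝ) < U 1 0*V 0 0*(U 2 1*V 1 1) + U 1 1*V 1 0*(U 2 0*V 0 1) - U 1 0*V 0 1*(U 2 1*V 1 0) - U 1 1*V 1 1*(U 2 0*V 0 0) := by
        have hkey : U 1 0*V 0 0*(U 2 1*V 1 1) + U 1 1*V 1 0*(U 2 0*V 0 1) - U 1 0*V 0 1*(U 2 1*V 1 0) - U 1 1*V 1 1*(U 2 0*V 0 0) = (a*c-b)*((a'*c'-b')*(a*c'+b+b')^2) := by
          simp [hU, hV]; ring
        rw [hkey]
        exact mul_pos h1 (mul_pos h2 (pow_pos hCC 2))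
      filter_upwards [ev3' ((U 1 0*V 0 0*(U 2 1*V 1 1) + U 1 1*V 1 0*(U 2 0*V 0 1) - U 1 0*V 0 1*(U 2 1*V 1 0) - U 1 1*V 1 1*(U 2 0*V 0 0))/(C^2*A))
        ((U 1 0*V 0 0*(U 2 2*V 2 1) + U 1 2*V 2 0*(U 2 0*V 0 1) - U 1 0*V 0 1*(U 2 2*V 2 0) - U 1 2*V 2 1*(U 2 0*V 0 0))/(C*A) + (U 1 1*V 1 0*(U 2 1*V 1 1) - U 1 1*V 1 1*(U 2 1*V 1 0))/(C^2*A^2))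
        ((U 1 1*V 1 0*(U 2 2*V 2 1) + U 1 2*V 2 0*(U 2 1*V 1 1) - U 1 1*V 1 1*(U 2 2*V 2 0) - U 1 2*V 2 1*(U 2 1*V 1 0))/(C*A^2))
        ((U 1 2*V 2 0*(U 2 2*V 2 1) - U 1 2*V 2 1*(U 2 2*V 2 0))/A^2)
        (div_pos hN (by positivity))] with x hx
      rw [hgx', hgx', hgx', hgx']
      convert hx using 1
      ring
    · show ∀ᶠ x : ℝ in Filter.atTop,
          0 < (S * diagonal ![x^2, x, 1] * T) 1 1 * (S * diagonal ![x^2, x, 1] * T) 2 2 - (S * diagonal ![x^2, x, 1] * T) 1 2 * (S * diagonal ![x^2, x, 1] * T) 2 1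
      have hN : (0:ℝ) < U 1 0*V 0 1*(U 2 1*V 1 2) + U 1 1*V 1 1*(U 2 0*V 0 2) - U 1 0*V 0 2*(U 2 1*V 1 1) - U 1 1*V 1 2*(U 2 0*V 0 1) := by
        have hkey : U 1 0*V 0 1*(U 2 1*V 1 2) + U 1 1*V 1 1*(U 2 0*V 0 2) - U 1 0*V 0 2*(U 2 1*V 1 1) - U 1 1*V 1 2*(U 2 0*V 0 1) = (a*c-b)*(a*c'+b+b')^2 := by
          simp [hU, hV]; ring
        rw [hkey]
        exact mul_pos h1 (pow_pos hCC 2)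
      filter_upwards [ev3' ((U 1 0*V 0 1*(U 2 1*V 1 2) + U 1 1*V 1 1*(U 2 0*V 0 2) - U 1 0*V 0 2*(U 2 1*V 1 1) - U 1 1*V 1 2*(U 2 0*V 0 1))/(C^2*A))
        ((U 1 0*V 0 1*(U 2 2*V 2 2) + U 1 2*V 2 1*(U 2 0*V 0 2) - U 1 0*V 0 2*(U 2 2*V 2 1) - U 1 2*V 2 2*(U 2 0*V 0 1))/(C*A) + (U 1 1*V 1 1*(U 2 1*V 1 2) - U 1 1*V 1 2*(U 2 1*V 1 1))/(C^2*A^2))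
        ((U 1 1*V 1 1*(U 2 2*V 2 2) + U 1 2*V 2 1*(U 2 1*V 1 2) - U 1 1*V 1 2*(U 2 2*V 2 1) - U 1 2*V 2 2*(U 2 1*V 1 1))/(C*A^2))
        ((U 1 2*V 2 1*(U 2 2*V 2 2) - U 1 2*V 2 2*(U 2 2*V 2 1))/A^2)
        (div_pos hN (by positivity))] with x hx
      rw [hgx', hgx', hgx', hgx']
      convert hx using 1
      ring
  -- determinant
  have hdet : ∀ x : ℝ, 0 < x → 0 < (S * diagonal ![x^2, x, 1] * T).det := by
    intro x hx
    have hd2 : S.det * T.det = 1 := by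
      have := congrArg Matrix.det hST
      rwa [Matrix.det_mul, Matrix.det_one] at this
    have hd1 : (S * diagonal ![x^2, x, 1] * T).det = (S.det * T.det) * x^3 := by
      rw [Matrix.det_mul, Matrix.det_mul, Matrix.det_diagonal, Fin.prod_univ_three]
      simp; ring
    rw [hd1, hd2]; positivity
  obtain ⟨x, hx1, hxE, hxM⟩ := (((eventually_gt_atTop (1:ℝ)).and (E.and M))).exists
  refine ⟨x^2, x, 1, ?_, hx1, one_pos, hxE, hxM, hdet x (by linarith)⟩
  nlinarith
end

section
/- Let g ∈ GL₃(ℝ) be totally positive: all entries positive, the four consecutive 2×2 minors g_{i,j}g_{i+1,j+1} − g_{i,j+1}g_{i+1,j} for (i,j) ∈ {(1,1),(1,2),(2,1),(2,2)} positive, and det g > 0. Then all nine 2×2 minors of g are positive. -/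
open Matrix

theorem stmt16 (g : Matrix (Fin 3) (Fin 3) ℝ)
    (hpos : ∀ i j : Fin 3, 0 < g i j)
    (hminors : ∀ i j : Fin 2, 0 < g i.castSucc j.castSucc * g i.succ j.succ -
        g i.castSucc j.succ * g i.succ j.castSucc)
    (hdet : 0 < g.det) :
    ∀ i j : Fin 3, 0 < (g.submatrix i.succAbove j.succAbove).det := by
  have h00 : 0 < g 0 0 * g 1 1 - g 0 1 * g 1 0 := hminors 0 0
  have h01 : 0 < g 0 1 * g 1 2 - g 0 2 * g 1 1 := hminors 0 1
  have h10 : 0 < g 1 0 * g 2 1 - g 1 1 * g 2 0 := hminors 1 0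
  have h11 : 0 < g 1 1 * g 2 2 - g 1 2 * g 2 1 := hminors 1 1
  have p00 := hpos 0 0; have p01 := hpos 0 1; have p02 := hpos 0 2
  have p10 := hpos 1 0; have p11 := hpos 1 1; have p12 := hpos 1 2
  have p20 := hpos 2 0; have p21 := hpos 2 1; have p22 := hpos 2 2
  rw [Matrix.det_fin_three] at hdet
  have m01 : 0 < g 1 0 * g 2 2 - g 1 2 * g 2 0 := by
    nlinarith [mul_pos p10 h11, mul_pos p12 h10]
  have m10 : 0 < g 0 1 * g 2 2 - g 0 2 * g 2 1 := by
    nlinarith [mul_pos p01 h11, mul_pos p21 h01]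
  have m12 : 0 < g 0 0 * g 2 1 - g 0 1 * g 2 0 := by
    nlinarith [mul_pos p21 h00, mul_pos p01 h10]
  have m21 : 0 < g 0 0 * g 1 2 - g 0 2 * g 1 0 := by
    nlinarith [mul_pos p12 h00, mul_pos p10 h01]
  have m11 : 0 < g 0 0 * g 2 2 - g 0 2 * g 2 0 := by
    nlinarith [hdet, mul_pos p01 m01, mul_pos p21 m21]
  intro i j
  fin_cases i <;> fin_cases j <;>
    simp only [Matrix.det_fin_two, Matrix.submatrix_apply] <;>
    · show (0:ℝ) < _
      norm_num [Fin.succAbove, Fin.lt_def]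
      linarith [h00, h01, h10, h11, m01, m10, m11, m12, m21]
end

section
/- Let u, v ∈ U⁻_{>0} ⊂ GL₃(ℝ) with u = [[1,0,0],[a,1,0],[b,c,1]], v = [[1,0,0],[a',1,0],[b',c',1]] (a,b,c,ac−b,a',b',c',a'c'−b' > 0). Then z = u⁻¹v⁻¹ = [[1,0,0],[−a−a',1,0],[A,−c−c',1]] where A = ac+a'c+a'c'−b−b', and z satisfies: its (2,1) and (3,2) entries are negative while A > 0 and (−a−a')(−c−c') − A = C' for some C' > 0; i.e., z ∈ U⁻_{<0}. -/
/-!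
Inverting `[[1,0,0],[x,1,0],[z,y,1]]` negates `x` and `y` and puts `x * y - z` in the corner, and
multiplying two such matrices adds the subdiagonals while the corner picks up `y * x'`. Hence
`A = (a c - b) + a' c + (a' c' - b') > 0` and `(a + a') (c + c') - A = a c' + b + b' > 0`.
-/

open Matrix

namespace Matrix

variable {R : Type*} [CommRing R]

theorem lowerUnitriangular_mul_lowerUnitriangular (x y z x' y' z' : R) :
    !![1, 0, 0; x, 1, 0; z, y, 1] * !![1, 0, 0; x', 1, 0; z', y', 1] =
      (!![1, 0, 0; x + x', 1, 0; z + y * x' + z', y + y', 1] : Matrix (Fin 3) (Fin 3) R) := by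
  simp only [mul_fin_three, mul_one, mul_zero, one_mul, zero_mul, add_zero, zero_add]

theorem inv_lowerUnitriangular (x y z : R) :
    (!![1, 0, 0; x, 1, 0; z, y, 1] : Matrix (Fin 3) (Fin 3) R)⁻¹ =
      !![1, 0, 0; -x, 1, 0; x * y - z, -y, 1] := by
  refine inv_eq_left_inv ?_
  rw [lowerUnitriangular_mul_lowerUnitriangular, neg_add_cancel, neg_add_cancel,
    show x * y - z + -y * x + z = 0 by ring, one_fin_three]

end Matrix

theorem stmt18 (a b c a' b' c' : ℝ) (ha : 0 < a) (hb : 0 < b) (hc : 0 < c)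
    (ha' : 0 < a') (hb' : 0 < b') (hc' : 0 < c')
    (h1 : 0 < a * c - b) (h2 : 0 < a' * c' - b')
    (A : ℝ) (hA : A = a * c + a' * c + a' * c' - b - b') :
    (!![1, 0, 0; a, 1, 0; b, c, 1] : Matrix (Fin 3) (Fin 3) ℝ)⁻¹ *
      (!![1, 0, 0; a', 1, 0; b', c', 1] : Matrix (Fin 3) (Fin 3) ℝ)⁻¹ =
      !![1, 0, 0; -a - a', 1, 0; A, -c - c', 1] ∧
    (-a - a' < 0 ∧ -c - c' < 0 ∧ 0 < A ∧
      ∃ C' : ℝ, 0 < C' ∧ (-a - a') * (-c - c') - A = C') := by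
  have hA' : A = (a * c - b) + -c * -a' + (a' * c' - b') := by rw [hA]; ring
  have hA_pos : 0 < A := by rw [hA', neg_mul_neg]; positivity
  refine ⟨?_, by linarith, by linarith, hA_pos, a * c' + b + b', by positivity, by rw [hA]; ring⟩
  rw [inv_lowerUnitriangular, inv_lowerUnitriangular, lowerUnitriangular_mul_lowerUnitriangular,
    hA', sub_eq_add_neg (-a), sub_eq_add_neg (-c)]
end

section
/- For M = [[1,0,0],[x,1,0],[z,y,1]] with x,y < 0 and z, xy−z > 0, and M̃ = [[1, y/(xy−z), 1/z],[0,1,x/z],[0,0,1]], the conjugates M·B⁺·M⁻¹ and M̃·B⁻·M̃⁻¹ are equal as subgroups of GL₃(ℂ). -/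
open Matrix

set_option maxHeartbeats 1000000

theorem stmt19 (x y z : ℝ) (hx : x < 0) (hy : y < 0) (hz : 0 < z)
    (hxyz : 0 < x * y - z) :
    (fun b => !![1, 0, 0; (x : ℂ), 1, 0; (z : ℂ), (y : ℂ), 1] * b *
        (!![1, 0, 0; (x : ℂ), 1, 0; (z : ℂ), (y : ℂ), 1])⁻¹) '' Bplus =
    (fun b => !![1, (y : ℂ)/((x : ℂ) * y - z), 1/(z : ℂ); 0, 1, (x : ℂ)/z; 0, 0, 1] * b *
        (!![1, (y : ℂ)/((x : ℂ) * y - z), 1/(z : ℂ); 0, 1, (x : ℂ)/z; 0, 0, 1])⁻¹) ''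
      Bminus := by
  have hz0 : (z : ℂ) ≠ 0 := Complex.ofReal_ne_zero.mpr hz.ne'
  have hw0 : (x : ℂ) * y - z ≠ 0 := by
    have h := Complex.ofReal_ne_zero.mpr hxyz.ne'
    push_cast at h
    exact h
  have hw0' : -(z : ℂ) + (x : ℂ) * y ≠ 0 := by
    intro h; exact hw0 (by linear_combination h)
  set M : Matrix (Fin 3) (Fin 3) ℂ := !![1, 0, 0; (x : ℂ), 1, 0; (z : ℂ), (y : ℂ), 1]
    with hMdef
  set Mt : Matrix (Fin 3) (Fin 3) ℂ :=
    !![1, (y : ℂ)/((x : ℂ) * y - z), 1/(z : ℂ); 0, 1, (x : ℂ)/z; 0, 0, 1] with hMtdef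
  set N : Matrix (Fin 3) (Fin 3) ℂ :=
    !![0, 0, 1/((x : ℂ) * y - z); 0, ((z : ℂ) - x * y)/z, -(x : ℂ)/z; (z : ℂ), (y : ℂ), 1]
    with hNdef
  set Ni : Matrix (Fin 3) (Fin 3) ℂ :=
    !![1, (y : ℂ)/((x : ℂ) * y - z), 1/(z : ℂ); -(x : ℂ), -(z : ℂ)/((x : ℂ) * y - z), 0;
       (x : ℂ) * y - z, 0, 0] with hNidef
  have hNNi : N * Ni = 1 := by
    ext i j
    fin_cases i <;> fin_cases j <;>
      (simp [hNdef, hNidef, Matrix.mul_apply, Fin.sum_univ_three, Matrix.one_apply,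
             Matrix.vecHead, Matrix.vecTail] <;>
       (try first | ring1 | (field_simp; try ring1)))
  have hNiN : Ni * N = 1 := mul_eq_one_comm.mp hNNi
  have hw0'' : (y : ℂ) * x - z ≠ 0 := by
    intro h; exact hw0 (by linear_combination h)
  have hMtN : Mt * N = M := by
    ext i j
    fin_cases i <;> fin_cases j <;>
      (simp [hMdef, hMtdef, hNdef, Matrix.mul_apply, Fin.sum_univ_three,
             Matrix.vecHead, Matrix.vecTail] <;>
       (try first | ring1 | (field_simp; try ring1)))
  have hMNi : M * Ni = Mt := by
    ext i j
    fin_cases i <;> fin_cases j <;>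
      (simp [hMdef, hMtdef, hNidef, Matrix.mul_apply, Fin.sum_univ_three,
             Matrix.vecHead, Matrix.vecTail] <;>
       (try first | ring1 | (field_simp; try ring1)))
  have hNinv : N⁻¹ = Ni := Matrix.inv_eq_right_inv hNNi
  have hMinv : M⁻¹ = Ni * Mt⁻¹ := by rw [← hMtN, Matrix.mul_inv_rev, hNinv]
  have hNMinv : N * M⁻¹ = Mt⁻¹ := by
    rw [hMinv, ← Matrix.mul_assoc, hNNi, Matrix.one_mul]
  have hdet1 : N.det * Ni.det = 1 := by
    rw [← Matrix.det_mul, hNNi, Matrix.det_one]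
  ext X
  simp only [Set.mem_image]
  constructor
  · rintro ⟨b, hb, rfl⟩
    refine ⟨N * b * Ni, ⟨?_, ?_⟩, ?_⟩
    · have hdb : (N * b * Ni).det = b.det := by
        rw [Matrix.det_mul, Matrix.det_mul]
        calc N.det * b.det * Ni.det = b.det * (N.det * Ni.det) := by ring
          _ = b.det := by rw [hdet1, mul_one]
      rw [hdb]; exact hb.1
    · intro i j hij
      have h10 : b 1 0 = 0 := hb.2 1 0 (by norm_num)
      have h20 : b 2 0 = 0 := hb.2 2 0 (by norm_num)
      have h21 : b 2 1 = 0 := hb.2 2 1 (by norm_num)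
      fin_cases i <;> fin_cases j <;>
        (try (exfalso; revert hij; decide)) <;>
          simp [hNdef, hNidef, Matrix.mul_apply, Fin.sum_univ_three, h10, h20, h21,
                Matrix.vecHead, Matrix.vecTail, Matrix.vecMul, dotProduct]
    · show Mt * (N * b * Ni) * Mt⁻¹ = M * b * M⁻¹
      rw [hMinv, ← hMtN]
      simp only [Matrix.mul_assoc]
  · rintro ⟨c, hc, rfl⟩
    refine ⟨Ni * c * N, ⟨?_, ?_⟩, ?_⟩
    · have hdc : (Ni * c * N).det = c.det := by
        rw [Matrix.det_mul, Matrix.det_mul]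
        calc Ni.det * c.det * N.det = c.det * (N.det * Ni.det) := by ring
          _ = c.det := by rw [hdet1, mul_one]
      rw [hdc]; exact hc.1
    · intro i j hij
      have h01 : c 0 1 = 0 := hc.2 0 1 (by norm_num)
      have h02 : c 0 2 = 0 := hc.2 0 2 (by norm_num)
      have h12 : c 1 2 = 0 := hc.2 1 2 (by norm_num)
      fin_cases i <;> fin_cases j <;>
        (try (exfalso; revert hij; decide)) <;>
          simp [hNdef, hNidef, Matrix.mul_apply, Fin.sum_univ_three, h01, h02, h12,
                Matrix.vecHead, Matrix.vecTail, Matrix.vecMul, dotProduct]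
    · show M * (Ni * c * N) * M⁻¹ = Mt * c * Mt⁻¹
      rw [← hNMinv, ← hMNi]
      simp only [Matrix.mul_assoc]
end
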